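/- Define the integer sequence (U_n)_{n≥0} by U_0 = 0, U_1 = 1, and U_{n+1} = 6U_n − U_{n−1} for n ≥ 1. Then for every n ≥ 0, the integer U_n + U_{n+1} is a coordinate of a solution of the Pell equation associated with the norm form equation N_{ℚ(√2)/ℚ}(x_1 + x_2√2) = −1; that is, for every n ≥ 0 there exists y ∈ ℤ such that (U_n + U_{n+1})² − 2y² = −1. -/
import Mathlib


/-- **Remark 3.**  Define `(U_n)` by `U₀ = 0`, `U₁ = 1`, `U_{n+1} = 6U_n − U_{n−1}`.  Then for
every `n ≥ 0` the integer `U_n + U_{n+1}` is a second coordinate of a solution of the negative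
Pell equation `x² − 2y² = −1` attached to `N_{ℚ(√2)/ℚ}(x₁ + x₂√2) = −1`; that is, there exists
`y ∈ ℤ` with `(U_n + U_{n+1})² − 2y² = −1`.  (Here the coordinate in question plays the role of
`x₂`, i.e. there exists the complementary coordinate.) -/
theorem six_rec_sums_in_negative_pell2
    (U : ℕ → ℤ) (h0 : U 0 = 0) (h1 : U 1 = 1)
    (hrec : ∀ n : ℕ, 1 ≤ n → U (n + 1) = 6 * U n - U (n - 1)) :
    ∀ n : ℕ, ∃ y : ℤ, (U n + U (n + 1)) ^ 2 - 2 * y ^ 2 = -1 := by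
  have key : ∀ n : ℕ, U (n + 1) ^ 2 - 6 * U n * U (n + 1) + U n ^ 2 = 1 := by
    intro n
    induction n with
    | zero => rw [h0, h1]; ring
    | succ k ih =>
      have h := hrec (k + 1) (Nat.le_add_left 1 k)
      simp only [Nat.add_sub_cancel] at h
      rw [h]; ring_nf; ring_nf at ih; linarith
  intro n
  exact ⟨U (n + 1) - U n, by have := key n; ring_nf; ring_nf at this; linarith⟩
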